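/- arXiv:2003.02873 — 4 statements merged into one kernel-verified Lean document; each statement's English description precedes it below -/
import Mathlib

section
/- For every compact convex set F of policies (functions g: [K] × W → [0,1] with Σ_{a∈[K]} g(a,w) = 1 for all w) and every δ ∈ (0,1), there exists a policy g ∈ F such that for all f ∈ F, E_P[ Σ_{a∈[K]} f(a,W) / (δ/K + (1-δ) g(a,W)) ] ≤ 2K, where W is a random context with distribution P. -/
lemma my_log_one_add (u : ℝ) (hu : |u| ≤ 1/2) : u - 2*u^2 ≤ Real.log (1+u) := by
  have h1 : |(-u)| < 1 := by rw [abs_neg]; linarith [abs_nonneg u]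
  have h := Real.abs_log_sub_add_sum_range_le h1 1
  rw [Finset.sum_range_one] at h
  simp only [pow_one, abs_neg, Nat.cast_zero, zero_add, div_one] at h
  have h2 : |u| ^ 2 / (1 - |u|) ≤ 2 * u^2 := by
    rw [div_le_iff₀ (by linarith [abs_nonneg u])]
    have := sq_abs u
    nlinarith [abs_nonneg u, sq_nonneg u]
  have h3 := abs_le.mp h
  have e : (1 : ℝ) - -u = 1 + u := by ring
  rw [e] at h3
  linarith [h3.1]

lemma tangent_bound (δ Kr x : ℝ) (hδ0 : 0 < δ) (hδ1 : δ < 1) (hK : 2 ≤ Kr) (hx0 : 0 ≤ x) :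
    x / (δ/Kr + (1-δ)*x) ≤ 1 + (δ/Kr)*Kr^2*(x - 1/Kr) := by
  have hKr : 0 < Kr := by linarith
  have h1 : 0 < δ/Kr := by positivity
  have h2 : 0 ≤ (1-δ)*x := by nlinarith
  have hD : 0 < δ/Kr + (1-δ)*x := by linarith
  rw [div_le_iff₀ hD]
  have key : (1 + (δ/Kr)*Kr^2*(x - 1/Kr)) * (δ/Kr + (1-δ)*x) - x
      = (δ/Kr)*(1-δ)*Kr^2*(x-1/Kr)^2 := by
    field_simp
    ring
  have h3 : 0 ≤ (δ/Kr)*(1-δ)*Kr^2*(x-1/Kr)^2 :=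
    mul_nonneg (mul_nonneg (mul_nonneg h1.le (by linarith)) (sq_nonneg Kr)) (sq_nonneg _)
  linarith

lemma per_term (c β t x y : ℝ) (hc0 : 0 < c) (hβ0 : 0 < β) (ht0 : 0 < t)
    (ht2 : t ≤ c/(2*β)) (hx0 : 0 ≤ x) (hx1 : x ≤ 1) (hy0 : 0 ≤ y) (hy1 : y ≤ 1) :
    t*β*((y - x) / (c + β*x)) - 2*t^2*β^2/c^2
      ≤ Real.log (c + β*((1-t)*x + t*y)) - Real.log (c + β*x) := by
  set D : ℝ := c + β * x with hD_def
  have hDc : c ≤ D := by nlinarith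
  have hD0 : 0 < D := lt_of_lt_of_le hc0 hDc
  set u : ℝ := t*β*(y-x)/D with hu_def
  have hyx : |y - x| ≤ 1 := by rw [abs_le]; constructor <;> nlinarith
  have hubd : |u| ≤ t*β/c := by
    rw [hu_def, abs_div, abs_of_pos hD0, abs_mul, abs_mul, abs_of_pos ht0, abs_of_pos hβ0]
    apply div_le_div₀ (by positivity) _ hc0 hDc
    have := mul_le_mul_of_nonneg_left hyx (le_of_lt (mul_pos ht0 hβ0))
    linarith
  have htβc : t*β/c ≤ 1/2 := by
    rw [div_le_div_iff₀ hc0 (by norm_num : (0:ℝ) < 2)]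
    have h1 : t * (2*β) ≤ (c/(2*β)) * (2*β) := by nlinarith
    rw [div_mul_cancel₀ c (by positivity : (2*β) ≠ 0)] at h1
    nlinarith
  have hu2 : |u| ≤ 1/2 := le_trans hubd htβc
  have h1u : (0:ℝ) < 1 + u := by have := abs_le.mp hu2; linarith [this.1]
  have heq : c + β*((1-t)*x + t*y) = D * (1 + u) := by
    have hDu : D * u = t*β*(y-x) := by rw [hu_def]; field_simp
    have e3 : D * (1 + u) = D + t*β*(y-x) := by rw [mul_add, mul_one, hDu]
    rw [e3, hD_def]; ring
  rw [heq, Real.log_mul hD0.ne' h1u.ne']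
  have hlg := my_log_one_add u hu2
  have hu2b : 2*u^2 ≤ 2*t^2*β^2/c^2 := by
    have h4 : u^2 ≤ (t*β/c)^2 := by
      rw [← sq_abs u]
      exact pow_le_pow_left₀ (abs_nonneg u) hubd 2
    have e : (t*β/c)^2 = t^2*β^2/c^2 := by ring
    rw [e] at h4
    have e2 : 2*t^2*β^2/c^2 = 2*(t^2*β^2/c^2) := by ring
    linarith
  have hrw : t*β*((y - x) / D) = u := by rw [hu_def]; ring
  rw [hrw]
  linarith

lemma key_sum (K : ℕ) (c β t : ℝ) (hc0 : 0 < c) (hβ0 : 0 < β) (ht0 : 0 < t)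
    (ht2 : t ≤ c/(2*β)) (x y : Fin K → ℝ)
    (hx : ∀ a, 0 ≤ x a ∧ x a ≤ 1) (hy : ∀ a, 0 ≤ y a ∧ y a ≤ 1) :
    ∑ a, -Real.log (c + β*((1-t)*x a + t*y a))
      ≤ ∑ a, -Real.log (c + β*x a) - t*β*(∑ a, (y a - x a)/(c + β*x a))
        + (K:ℝ)*(2*t^2*β^2/c^2) := by
  have hsum := Finset.sum_le_sum (fun a (_ : a ∈ Finset.univ) =>
    per_term c β t (x a) (y a) hc0 hβ0 ht0 ht2 (hx a).1 (hx a).2 (hy a).1 (hy a).2)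
  rw [Finset.sum_sub_distrib, Finset.sum_sub_distrib, ← Finset.mul_sum,
    Finset.sum_const, Finset.card_univ, Fintype.card_fin, nsmul_eq_mul] at hsum
  have e1 : ∑ a, -Real.log (c + β*((1-t)*x a + t*y a))
      = -∑ a, Real.log (c + β*((1-t)*x a + t*y a)) := by rw [Finset.sum_neg_distrib]
  have e2 : ∑ a, -Real.log (c + β*x a) = -∑ a, Real.log (c + β*x a) := by
    rw [Finset.sum_neg_distrib]
  rw [e1, e2]
  linarith

lemma sum_ratio_le (K : ℕ) (hK : 2 ≤ K) (δ : ℝ) (hδ0 : 0 < δ) (hδ1 : δ < 1)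
    (x : Fin K → ℝ) (hx : ∀ a, 0 ≤ x a) (hsum : ∑ a, x a = 1) :
    ∑ a, x a / (δ/(K:ℝ) + (1-δ)*x a) ≤ (K:ℝ) := by
  have hKr : (2:ℝ) ≤ (K:ℝ) := by exact_mod_cast hK
  calc ∑ a, x a / (δ/(K:ℝ) + (1-δ)*x a)
      ≤ ∑ a, (1 + (δ/(K:ℝ))*(K:ℝ)^2*(x a - 1/(K:ℝ))) :=
        Finset.sum_le_sum fun a _ => tangent_bound δ (K:ℝ) (x a) hδ0 hδ1 hKr (hx a)
    _ = (K:ℝ) := by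
        rw [Finset.sum_add_distrib, Finset.sum_const, Finset.card_univ, Fintype.card_fin,
          nsmul_eq_mul, mul_one, ← Finset.mul_sum, Finset.sum_sub_distrib, hsum,
          Finset.sum_const, Finset.card_univ, Fintype.card_fin, nsmul_eq_mul]
        have : (K:ℝ) ≠ 0 := by positivity
        field_simp
        ring

open MeasureTheory

set_option maxHeartbeats 2000000 in
/-- **Policy elimination exploration policy existence** (Prop. 1 / Dudík et al. 2011).
For every compact convex set `F` of policies and every `δ ∈ (0,1)`, there exists a policy
`g ∈ F` such that for all `f ∈ F`,
`E_P[ Σ_a f a W / (δ/K + (1-δ) g a W) ] ≤ 2K`. -/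
theorem policy_elimination_exploration_policy_exists
    {W : Type*} [MeasurableSpace W] (P : Measure W) [IsProbabilityMeasure P]
    (K : ℕ) (hK : 2 ≤ K) (F : Set (Fin K → W → ℝ))
    (hpol : ∀ g ∈ F, (∀ a w, g a w ∈ Set.Icc (0:ℝ) 1) ∧ ∀ w, ∑ a, g a w = 1)
    (hcomp : IsCompact F) (hconv : Convex ℝ F) (hne : F.Nonempty)
    (δ : ℝ) (hδ : δ ∈ Set.Ioo (0:ℝ) 1)
    (hint : ∀ f ∈ F, ∀ g ∈ F,
      Integrable (fun w => ∑ a, f a w / (δ / K + (1 - δ) * g a w)) P) :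
    ∃ g ∈ F, ∀ f ∈ F,
      (∫ w, ∑ a, f a w / (δ / K + (1 - δ) * g a w) ∂P) ≤ 2 * K := by
  obtain ⟨hδ0, hδ1⟩ := hδ
  have hKr : (2:ℝ) ≤ (K:ℝ) := by exact_mod_cast hK
  have hK0 : (0:ℝ) < K := by linarith
  set c : ℝ := δ / K with hc_def
  set β : ℝ := 1 - δ with hβ_def
  have hc0 : 0 < c := by rw [hc_def]; positivity
  have hβ0 : 0 < β := by rw [hβ_def]; linarith
  have hcβ : c + β ≤ 1 := by
    have : c ≤ δ := by rw [hc_def]; exact div_le_self hδ0.le (by linarith)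
    rw [hβ_def]; linarith
  clear_value c β
  -- denominator bounds
  have hDlb : ∀ g ∈ F, ∀ (a : Fin K) (w : W), c ≤ c + β * g a w := by
    intro g hg a w
    have hb := (hpol g hg).1 a w
    nlinarith [hb.1]
  have hDub : ∀ g ∈ F, ∀ (a : Fin K) (w : W), c + β * g a w ≤ 1 := by
    intro g hg a w
    have hb := (hpol g hg).1 a w
    nlinarith [hb.2]
  -- the potential
  set A : (Fin K → W → ℝ) → W → ℝ := fun q w => ∑ a, -Real.log (c + β * q a w) with hA_def
  have hA0 : ∀ q ∈ F, ∀ w, 0 ≤ A q w := by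
    intro q hq w
    apply Finset.sum_nonneg
    intro a _
    have h1 := hDlb q hq a w
    have h2 := hDub q hq a w
    simp only [neg_nonneg]
    exact Real.log_nonpos (by linarith) h2
  have hA1 : ∀ q ∈ F, ∀ w, A q w ≤ (K:ℝ) * (-Real.log c) := by
    intro q hq w
    calc A q w ≤ ∑ _a : Fin K, (-Real.log c) := by
          apply Finset.sum_le_sum
          intro a _
          have h1 := hDlb q hq a w
          exact neg_le_neg (Real.log_le_log hc0 h1)
      _ = (K:ℝ) * (-Real.log c) := by
          rw [Finset.sum_const, Finset.card_univ, Fintype.card_fin, nsmul_eq_mul]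
  set Ψ : (Fin K → W → ℝ) → ENNReal := fun q => ∫⁻ w, ENNReal.ofReal (A q w) ∂P with hΨ_def
  have hΨub : ∀ q ∈ F, Ψ q ≤ ENNReal.ofReal ((K:ℝ) * (-Real.log c)) := by
    intro q hq
    calc Ψ q ≤ ∫⁻ _w, ENNReal.ofReal ((K:ℝ) * (-Real.log c)) ∂P :=
          lintegral_mono fun w => ENNReal.ofReal_le_ofReal (hA1 q hq w)
      _ = ENNReal.ofReal ((K:ℝ) * (-Real.log c)) := by
          rw [lintegral_const, measure_univ, mul_one]
  have hΨtop : ∀ q ∈ F, Ψ q ≠ ⊤ :=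
    fun q hq => ne_top_of_le_ne_top ENNReal.ofReal_ne_top (hΨub q hq)
  clear_value A Ψ
  -- step size and tolerance
  obtain ⟨t, ht0, ht1, ht2, ht3⟩ : ∃ t : ℝ, 0 < t ∧ t ≤ 1 ∧ t ≤ c/(2*β) ∧ t ≤ c^2/(4*β) :=
    ⟨min 1 (min (c/(2*β)) (c^2/(4*β))),
      lt_min one_pos (lt_min (div_pos hc0 (by linarith)) (div_pos (by positivity) (by linarith))),
      min_le_left _ _,
      le_trans (min_le_right _ _) (min_le_left _ _),
      le_trans (min_le_right _ _) (min_le_right _ _)⟩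
  set εr : ℝ := t*β*(K:ℝ)/4 with hεr_def
  have hεr0 : 0 < εr := by rw [hεr_def]; positivity
  clear_value εr
  set m : ENNReal := ⨅ q ∈ F, Ψ q with hm_def
  clear_value m
  obtain ⟨g₀, hg₀⟩ := hne
  have hm_le : ∀ q ∈ F, m ≤ Ψ q := by
    intro q hq
    rw [hm_def]
    exact iInf₂_le q hq
  have hm_top : m ≠ ⊤ := ne_top_of_le_ne_top (hΨtop g₀ hg₀) (hm_le g₀ hg₀)
  have hmlt : m < m + ENNReal.ofReal εr :=
    ENNReal.lt_add_right hm_top (ENNReal.ofReal_pos.mpr hεr0).ne'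
  obtain ⟨g, hgF, hgmin⟩ : ∃ q ∈ F, Ψ q < m + ENNReal.ofReal εr := by
    by_contra hcon
    push_neg at hcon
    have h1 : m + ENNReal.ofReal εr ≤ m := by
      conv_rhs => rw [hm_def]
      exact le_iInf₂ hcon
    exact absurd h1 (not_le.mpr hmlt)
  refine ⟨g, hgF, ?_⟩
  intro f hfF
  -- the perturbed policy
  set gt : Fin K → W → ℝ := fun a w => (1-t) * g a w + t * f a w with hgt_def
  have hgtF : gt ∈ F := by
    have hmem := hconv hgF hfF (by linarith : (0:ℝ) ≤ 1 - t) ht0.le (by ring)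
    have e : gt = (1-t) • g + t • f := by
      funext a w
      simp [hgt_def, Pi.smul_apply, smul_eq_mul]
    rw [e]
    exact hmem
  clear_value gt
  set h : W → ℝ := fun w => ∑ a, (f a w - g a w) / (c + β * g a w) with hh_def
  set B : ℝ := (K:ℝ)/c with hB_def
  set M : ℝ := (K:ℝ) * (2*t^2*β^2/c^2) with hM_def
  have hM0 : 0 ≤ M := by
    rw [hM_def]
    apply mul_nonneg (by positivity)
    positivity
  have hB0 : 0 ≤ B := by
    rw [hB_def]
    exact div_nonneg (by positivity) hc0.le
  clear_value h B M
  have Ig : Integrable (fun w => ∑ a, g a w / (c + β * g a w)) P := hint g hgF g hgF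
  have If : Integrable (fun w => ∑ a, f a w / (c + β * g a w)) P := hint f hfF g hgF
  have hsplit : ∀ w, h w = (∑ a, f a w / (c + β * g a w)) - (∑ a, g a w / (c + β * g a w)) := by
    intro w
    simp only [hh_def]
    rw [← Finset.sum_sub_distrib]
    exact Finset.sum_congr rfl fun a _ => (div_sub_div_same _ _ _).symm
  have Ih : Integrable h P := by
    have heq : (fun w => (∑ a, f a w / (c + β * g a w)) - (∑ a, g a w / (c + β * g a w))) = h := by
      funext w
      rw [hsplit w]
    exact heq ▸ (If.sub Ig)
  have hhbd : ∀ w, |h w| ≤ B := by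
    intro w
    simp only [hh_def]
    calc |∑ a, (f a w - g a w) / (c + β * g a w)|
        ≤ ∑ a, |(f a w - g a w) / (c + β * g a w)| := Finset.abs_sum_le_sum_abs _ _
      _ ≤ ∑ _a : Fin K, 1/c := by
          apply Finset.sum_le_sum
          intro a _
          have hD := hDlb g hgF a w
          have hfb := (hpol f hfF).1 a w
          have hgb := (hpol g hgF).1 a w
          rw [abs_div, abs_of_pos (lt_of_lt_of_le hc0 hD)]
          apply div_le_div₀ (by norm_num) _ hc0 hD
          rw [abs_le]
          constructor
          · nlinarith [hfb.1, hgb.2]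
          · nlinarith [hfb.2, hgb.1]
      _ = B := by
          rw [Finset.sum_const, Finset.card_univ, Fintype.card_fin, nsmul_eq_mul, hB_def]
          ring
  -- key pointwise inequality
  have hkey : ∀ w, A gt w ≤ A g w - t*β*h w + M := by
    intro w
    have hks := key_sum K c β t hc0 hβ0 ht0 ht2 (fun a => g a w) (fun a => f a w)
      (fun a => ⟨((hpol g hgF).1 a w).1, ((hpol g hgF).1 a w).2⟩)
      (fun a => ⟨((hpol f hfF).1 a w).1, ((hpol f hfF).1 a w).2⟩)
    simp only [hA_def, hgt_def, hh_def, hM_def]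
    exact hks
  -- nonnegativity of the correction term
  have hφnn : ∀ w, 0 ≤ t*β*(h w + B) := by
    intro w
    have h1 := (abs_le.mp (hhbd w)).1
    have h2 : (0:ℝ) ≤ t*β := le_of_lt (mul_pos ht0 hβ0)
    nlinarith
  have hMB0 : 0 ≤ M + t*β*B := by
    have h2 : (0:ℝ) ≤ t*β := le_of_lt (mul_pos ht0 hβ0)
    nlinarith
  -- pointwise ENNReal inequality
  have hptw : ∀ w, ENNReal.ofReal (A gt w) + ENNReal.ofReal (t*β*(h w + B))
      ≤ ENNReal.ofReal (A g w) + ENNReal.ofReal (M + t*β*B) := by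
    intro w
    rw [← ENNReal.ofReal_add (hA0 gt hgtF w) (hφnn w),
      ← ENNReal.ofReal_add (hA0 g hgF w) hMB0]
    apply ENNReal.ofReal_le_ofReal
    have e1 : t*β*(h w + B) = t*β*h w + t*β*B := by ring
    have hk := hkey w
    linarith
  have hφmeas : AEMeasurable (fun w => ENNReal.ofReal (t*β*(h w + B))) P :=
    ENNReal.measurable_ofReal.comp_aemeasurable
      (((Ih.aemeasurable).add_const B).const_mul (t*β))
  have hlin : Ψ gt + ∫⁻ w, ENNReal.ofReal (t*β*(h w + B)) ∂P
      ≤ Ψ g + ENNReal.ofReal (M + t*β*B) := by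
    have e := lintegral_add_right' (μ := P) (fun w => ENNReal.ofReal (A gt w)) hφmeas
    calc Ψ gt + ∫⁻ w, ENNReal.ofReal (t*β*(h w + B)) ∂P
        = ∫⁻ w, (ENNReal.ofReal (A gt w) + ENNReal.ofReal (t*β*(h w + B))) ∂P := by
          simp only [hΨ_def]
          exact e.symm
      _ ≤ ∫⁻ w, (ENNReal.ofReal (A g w) + ENNReal.ofReal (M + t*β*B)) ∂P :=
          lintegral_mono hptw
      _ = Ψ g + ENNReal.ofReal (M + t*β*B) := by
          simp only [hΨ_def]
          rw [lintegral_add_right _ measurable_const, lintegral_const, measure_univ, mul_one]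
  have hq1 : Ψ g < Ψ gt + ENNReal.ofReal εr :=
    lt_of_lt_of_le hgmin (add_le_add_left (hm_le gt hgtF) _)
  have h5 : Ψ gt + ∫⁻ w, ENNReal.ofReal (t*β*(h w + B)) ∂P
      < Ψ gt + (ENNReal.ofReal εr + ENNReal.ofReal (M + t*β*B)) := by
    calc Ψ gt + ∫⁻ w, ENNReal.ofReal (t*β*(h w + B)) ∂P
        ≤ Ψ g + ENNReal.ofReal (M + t*β*B) := hlin
      _ < (Ψ gt + ENNReal.ofReal εr) + ENNReal.ofReal (M + t*β*B) :=
          ENNReal.add_lt_add_right ENNReal.ofReal_ne_top hq1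
      _ = Ψ gt + (ENNReal.ofReal εr + ENNReal.ofReal (M + t*β*B)) := by rw [add_assoc]
  have h6 : ∫⁻ w, ENNReal.ofReal (t*β*(h w + B)) ∂P
      < ENNReal.ofReal εr + ENNReal.ofReal (M + t*β*B) :=
    (ENNReal.add_lt_add_iff_left (hΨtop gt hgtF)).mp h5
  have hIφ : Integrable (fun w => t*β*(h w + B)) P :=
    (Ih.add (integrable_const B)).const_mul (t*β)
  have h7 : ∫⁻ w, ENNReal.ofReal (t*β*(h w + B)) ∂P
      = ENNReal.ofReal (∫ w, t*β*(h w + B) ∂P) :=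
    (ofReal_integral_eq_lintegral_ofReal hIφ (Filter.Eventually.of_forall hφnn)).symm
  have h8 : ∫ w, t*β*(h w + B) ∂P = t*β*((∫ w, h w ∂P) + B) := by
    rw [MeasureTheory.integral_const_mul]
    congr 1
    rw [integral_add Ih (integrable_const B), integral_const, probReal_univ]
    simp
  have h9 : t*β*((∫ w, h w ∂P) + B) < εr + (M + t*β*B) := by
    have hpos : (0:ℝ) < εr + (M + t*β*B) := by linarith
    apply (ENNReal.ofReal_lt_ofReal_iff hpos).mp
    rw [ENNReal.ofReal_add hεr0.le hMB0]
    rw [h7, h8] at h6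
    exact h6
  have hM2 : M ≤ t*β*((K:ℝ)/2) := by
    have h4β : 4*β*t ≤ c^2 := by
      have := mul_le_mul_of_nonneg_right ht3 (by positivity : (0:ℝ) ≤ 4*β)
      rw [div_mul_cancel₀ (c^2) (by positivity : (4*β) ≠ 0)] at this
      linarith
    have e : 2*t^2*β^2/c^2 ≤ t*β/2 := by
      rw [div_le_div_iff₀ (by positivity) (by norm_num : (0:ℝ) < 2)]
      nlinarith [mul_le_mul_of_nonneg_left h4β (le_of_lt (mul_pos ht0 hβ0))]
    rw [hM_def]
    calc (K:ℝ) * (2*t^2*β^2/c^2) ≤ (K:ℝ) * (t*β/2) :=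
          mul_le_mul_of_nonneg_left e (by positivity)
      _ = t*β*((K:ℝ)/2) := by ring
  have hIh_lt : (∫ w, h w ∂P) < (K:ℝ) := by
    have h10 : t*β*(∫ w, h w ∂P) < t*β*((K:ℝ)*3/4) := by
      have e1 : εr ≤ t*β*((K:ℝ)/4) := by rw [hεr_def]; ring_nf; linarith [le_refl (t*β*(K:ℝ)/4)]
      nlinarith [h9]
    have h11 := (mul_lt_mul_iff_right₀ (mul_pos ht0 hβ0)).mp h10
    linarith
  -- bound on the self-normalized integral
  have hVg : (∫ w, ∑ a, g a w / (c + β * g a w) ∂P) ≤ (K:ℝ) := by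
    have hpt : ∀ w, ∑ a, g a w / (c + β * g a w) ≤ (K:ℝ) := by
      intro w
      have hs := sum_ratio_le K hK δ hδ0 hδ1 (fun a => g a w)
        (fun a => ((hpol g hgF).1 a w).1) ((hpol g hgF).2 w)
      rw [← hc_def, ← hβ_def] at hs
      exact hs
    calc (∫ w, ∑ a, g a w / (c + β * g a w) ∂P) ≤ ∫ _w, (K:ℝ) ∂P :=
          integral_mono Ig (integrable_const _) hpt
      _ = (K:ℝ) := by simp
  have hIheq : (∫ w, h w ∂P)
      = (∫ w, ∑ a, f a w / (c + β * g a w) ∂P) - (∫ w, ∑ a, g a w / (c + β * g a w) ∂P) := by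
    have e : (∫ w, h w ∂P)
        = ∫ w, ((∑ a, f a w / (c + β * g a w)) - (∑ a, g a w / (c + β * g a w))) ∂P := by
      congr 1
      funext w
      exact hsplit w
    rw [e, integral_sub If Ig]
  have := hIheq ▸ hIh_lt
  linarith [hVg, hIh_lt, hIheq]
end

section
/- Let C be a compact convex subset of R^{K(t-1)} whose elements w satisfy w_{a,τ} ∈ [0,1] and Σ_{a∈[K]} w_{a,τ} = 1 for each τ. Then for any δ ∈ (0,1) there exists w ∈ C such that max_{z ∈ C} (1/(t-1)) Σ_{a∈[K], τ∈[t-1]} z_{a,τ} / (δ/K + (1-δ) w_{a,τ}) ≤ (4/3) K. -/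
/-- Tangent-line trick: for `x ∈ [0,1]`, `x/(δ/K+(1-δ)x) ≤ 1-δ+δKx`. -/
lemma finexp_tangent (K : ℕ) (hK : 2 ≤ K) (δ x : ℝ) (hδ0 : 0 < δ) (hδ1 : δ < 1)
    (hx0 : 0 ≤ x) :
    x / (δ / K + (1 - δ) * x) ≤ 1 - δ + δ * K * x := by
  have hKpos : (0:ℝ) < K := by exact_mod_cast Nat.lt_of_lt_of_le (by norm_num) hK
  have hd : 0 < δ / K + (1 - δ) * x := by
    have := div_pos hδ0 hKpos
    nlinarith [mul_nonneg (sub_pos.mpr hδ1).le hx0]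
  rw [div_le_iff₀ hd, div_add' _ _ _ (ne_of_gt hKpos), mul_div_assoc', le_div_iff₀ hKpos]
  nlinarith [mul_nonneg (mul_nonneg hδ0.le (sub_pos.mpr hδ1).le) (sq_nonneg ((K:ℝ)*x-1))]

set_option maxHeartbeats 1000000 in
/-- **Finite-sample exploration policy existence** (Lemma: fundamental PE property, finite
version). For a compact convex set `C ⊆ ℝ^{K(t-1)}` of per-time-point action distributions
and any `δ ∈ (0,1)`, there is `w ∈ C` such that
`max_{z ∈ C} (1/(t-1)) Σ_{a,τ} z_{a,τ}/(δ/K + (1-δ) w_{a,τ}) ≤ (4/3) K`. -/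
theorem finite_exploration_policy_exists
    (K t : ℕ) (hK : 2 ≤ K) (ht : 2 ≤ t)
    (C : Set (Fin K → Fin (t - 1) → ℝ))
    (hcomp : IsCompact C) (hconv : Convex ℝ C) (hne : C.Nonempty)
    (hsimplex : ∀ w ∈ C, (∀ a τ, w a τ ∈ Set.Icc (0:ℝ) 1) ∧ ∀ τ, ∑ a, w a τ = 1)
    (δ : ℝ) (hδ : δ ∈ Set.Ioo (0:ℝ) 1) :
    ∃ w ∈ C, ∀ z ∈ C,
      (1 / ((t : ℝ) - 1)) * ∑ a, ∑ τ, z a τ / (δ / K + (1 - δ) * w a τ) ≤ (4 / 3) * K := by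
  obtain ⟨hδ0, hδ1⟩ := hδ
  have hKpos : (0:ℝ) < K := by exact_mod_cast Nat.lt_of_lt_of_le (by norm_num) hK
  have hK2 : (2:ℝ) ≤ K := by exact_mod_cast hK
  have h1δ : (0:ℝ) < 1 - δ := sub_pos.mpr hδ1
  -- the denominator function
  set D : (Fin K → Fin (t - 1) → ℝ) → Fin K → Fin (t - 1) → ℝ :=
    fun w a τ => δ / K + (1 - δ) * w a τ with hD
  have hDpos : ∀ w ∈ C, ∀ (a : Fin K) (τ : Fin (t-1)), 0 < D w a τ := by
    intro w hw a τ
    have h0 := ((hsimplex w hw).1 a τ).1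
    have := div_pos hδ0 hKpos
    have := mul_nonneg h1δ.le h0
    simp only [hD]; linarith
  -- the log-barrier potential
  set Φ : (Fin K → Fin (t - 1) → ℝ) → ℝ :=
    fun w => ∑ a, ∑ τ, -Real.log (D w a τ) with hΦ
  have hcont : ContinuousOn Φ C := by
    apply continuousOn_finset_sum
    intro a _
    apply continuousOn_finset_sum
    intro τ _
    apply ContinuousOn.neg
    apply ContinuousOn.log
    · exact (continuous_const.add
        (continuous_const.mul (continuous_apply_apply a τ))).continuousOn
    · intro w hw; exact ne_of_gt (hDpos w hw a τ)
  obtain ⟨w, hwC, hmin⟩ := hcomp.exists_isMinOn hne hcont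
  refine ⟨w, hwC, ?_⟩
  intro z hz
  -- the perturbation parameter
  set s : ℝ := δ / (8 * K) with hs
  have hs0 : 0 < s := div_pos hδ0 (by positivity)
  have hs16 : s ≤ 1 / 16 := by
    rw [hs, div_le_div_iff₀ (by positivity) (by norm_num)]
    nlinarith
  have hs1 : s < 1 := lt_of_le_of_lt hs16 (by norm_num)
  -- the perturbed point
  set u : Fin K → Fin (t - 1) → ℝ := (1 - s) • w + s • z with hu
  have huC : u ∈ C := hconv hwC hz (by linarith) hs0.le (by ring)
  have hDu : ∀ (a : Fin K) (τ : Fin (t-1)),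
      D u a τ = (1 - s) * D w a τ + s * D z a τ := by
    intro a τ
    simp only [hD, hu, Pi.add_apply, Pi.smul_apply, smul_eq_mul]
    ring
  have hDupos := hDpos u huC
  have hDwpos := hDpos w hwC
  have hDzpos := hDpos z hz
  clear_value s u D Φ
  -- Step 1: from optimality and log x ≤ x - 1:  ∑∑ z/Du ≤ ∑∑ w/Du
  have step1 : ∑ a, ∑ τ, z a τ / D u a τ ≤ ∑ a, ∑ τ, w a τ / D u a τ := by
    have hopt : Φ w ≤ Φ u := hmin huC
    have hlog : ∀ (a : Fin K) (τ : Fin (t-1)),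
        Real.log (D w a τ) - Real.log (D u a τ) ≤ (D w a τ - D u a τ) / D u a τ := by
      intro a τ
      have h := Real.log_le_sub_one_of_pos (div_pos (hDwpos a τ) (hDupos a τ))
      rw [Real.log_div (ne_of_gt (hDwpos a τ)) (ne_of_gt (hDupos a τ))] at h
      calc Real.log (D w a τ) - Real.log (D u a τ) ≤ D w a τ / D u a τ - 1 := h
        _ = (D w a τ - D u a τ) / D u a τ := by
            rw [sub_div, div_self (ne_of_gt (hDupos a τ))]
    have hsum : (0:ℝ) ≤ ∑ a, ∑ τ, (D w a τ - D u a τ) / D u a τ := by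
      have heq : Φ u - Φ w = ∑ a, ∑ τ, (Real.log (D w a τ) - Real.log (D u a τ)) := by
        simp only [hΦ, ← Finset.sum_sub_distrib]
        congr 1; ext a; congr 1; ext τ; ring
      have h0 : (0:ℝ) ≤ ∑ a, ∑ τ, (Real.log (D w a τ) - Real.log (D u a τ)) := by
        rw [← heq]; linarith
      calc (0:ℝ) ≤ ∑ a, ∑ τ, (Real.log (D w a τ) - Real.log (D u a τ)) := h0
        _ ≤ ∑ a, ∑ τ, (D w a τ - D u a τ) / D u a τ := by
            apply Finset.sum_le_sum; intro a _
            apply Finset.sum_le_sum; intro τ _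
            exact hlog a τ
    have hrw : ∑ a, ∑ τ, (D w a τ - D u a τ) / D u a τ
        = s * (1 - δ) * ((∑ a, ∑ τ, w a τ / D u a τ) - ∑ a, ∑ τ, z a τ / D u a τ) := by
      rw [← Finset.sum_sub_distrib, Finset.mul_sum]
      congr 1; ext a
      rw [← Finset.sum_sub_distrib, Finset.mul_sum]
      congr 1; ext τ
      have h1 : D w a τ - D u a τ = s * (1 - δ) * (w a τ - z a τ) := by
        rw [hDu a τ]; simp only [hD]; ring
      rw [h1, mul_div_assoc, sub_div]
    rw [hrw] at hsum
    nlinarith [mul_pos hs0 h1δ]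
  -- Step 2: ∑∑ w/Du ≤ (1/(1-s)) ∑∑ w/Dw, since Du ≥ (1-s) Dw
  have step2 : ∑ a, ∑ τ, w a τ / D u a τ
      ≤ (1 / (1 - s)) * ∑ a, ∑ τ, w a τ / D w a τ := by
    rw [Finset.mul_sum]
    apply Finset.sum_le_sum; intro a _
    rw [Finset.mul_sum]
    apply Finset.sum_le_sum; intro τ _
    have hw0 := ((hsimplex w hwC).1 a τ).1
    have hle : (1 - s) * D w a τ ≤ D u a τ := by
      rw [hDu a τ]
      nlinarith [hDzpos a τ]
    have hpos : 0 < (1 - s) * D w a τ := mul_pos (by linarith) (hDwpos a τ)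
    calc w a τ / D u a τ ≤ w a τ / ((1 - s) * D w a τ) :=
          div_le_div_of_nonneg_left hw0 hpos hle
      _ = (1 / (1 - s)) * (w a τ / D w a τ) := by
          rw [div_mul_eq_div_div_swap, div_eq_mul_one_div (w a τ / D w a τ), mul_comm]
  -- Step 3: tangent-line trick: ∑∑ w/Dw ≤ (t-1) K
  have step3 : ∑ a, ∑ τ, w a τ / D w a τ ≤ ((t:ℝ) - 1) * K := by
    have hcard : ∑ _τ : Fin (t-1), (K:ℝ) = ((t:ℝ) - 1) * K := by
      rw [Finset.sum_const, Finset.card_univ, Fintype.card_fin, nsmul_eq_mul,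
        Nat.cast_sub (by omega : 1 ≤ t), Nat.cast_one]
    rw [Finset.sum_comm]
    calc ∑ τ, ∑ a, w a τ / D w a τ ≤ ∑ _τ : Fin (t-1), (K:ℝ) := by
          apply Finset.sum_le_sum; intro τ _
          calc ∑ a, w a τ / D w a τ ≤ ∑ a, (1 - δ + δ * K * w a τ) := by
                apply Finset.sum_le_sum; intro a _
                simp only [hD]
                exact finexp_tangent K hK δ (w a τ) hδ0 hδ1 ((hsimplex w hwC).1 a τ).1
            _ = (K:ℝ) := by
                rw [Finset.sum_add_distrib, Finset.sum_const, Finset.card_univ,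
                  Fintype.card_fin, ← Finset.mul_sum, (hsimplex w hwC).2 τ, nsmul_eq_mul]
                ring
      _ = ((t:ℝ) - 1) * K := hcard
  -- Step 4: ∑∑ z/Dw ≤ (9/8) ∑∑ z/Du, since Du ≤ (9/8) Dw
  have step4 : ∑ a, ∑ τ, z a τ / D w a τ ≤ (9/8) * ∑ a, ∑ τ, z a τ / D u a τ := by
    rw [Finset.mul_sum]
    apply Finset.sum_le_sum; intro a _
    rw [Finset.mul_sum]
    apply Finset.sum_le_sum; intro τ _
    have hz0 := ((hsimplex z hz).1 a τ).1
    have hz1 := ((hsimplex z hz).1 a τ).2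
    have hw0 := ((hsimplex w hwC).1 a τ).1
    have hDzle : D z a τ ≤ 1 := by
      simp only [hD]
      have : δ / K ≤ δ / 2 := by
        apply div_le_div_of_nonneg_left hδ0.le (by norm_num) hK2
      nlinarith [mul_nonneg h1δ.le hz0]
    have hDwge : δ / K ≤ D w a τ := by
      simp only [hD]
      nlinarith [mul_nonneg h1δ.le hw0]
    have hDule : D u a τ ≤ (9/8) * D w a τ := by
      rw [hDu a τ]
      have h2 : s = 1/8 * (δ / K) := by rw [hs]; ring
      have h1 : s * D z a τ ≤ s := mul_le_of_le_one_right hs0.le hDzle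
      have h3 : (1:ℝ)/8 * (δ / K) ≤ 1/8 * D w a τ := by linarith
      have h4 : 0 ≤ s * D w a τ := mul_nonneg hs0.le (hDwpos a τ).le
      have h5 : s ≤ 1/8 * D w a τ := le_trans (le_of_eq h2) h3
      nlinarith [h1, h4, h5]
    rw [mul_div_assoc', div_le_div_iff₀ (hDwpos a τ) (hDupos a τ)]
    nlinarith [mul_le_mul_of_nonneg_left hDule hz0]
  -- Combine
  have hbound : ∑ a, ∑ τ, z a τ / D w a τ ≤ (6/5) * (((t:ℝ) - 1) * K) := by
    have h15 : (15/16 : ℝ) ≤ 1 - s := by linarith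
    have hSnn : 0 ≤ ∑ a, ∑ τ, w a τ / D w a τ := by
      apply Finset.sum_nonneg; intro a _
      apply Finset.sum_nonneg; intro τ _
      exact div_nonneg ((hsimplex w hwC).1 a τ).1 (hDwpos a τ).le
    have hfrac : (1 / (1 - s)) * ∑ a, ∑ τ, w a τ / D w a τ
        ≤ (16/15) * (((t:ℝ) - 1) * K) := by
      have h1 : (1 / (1 - s)) ≤ (16/15 : ℝ) := by
        rw [div_le_iff₀ (by linarith : (0:ℝ) < 1 - s)]; linarith
      calc (1 / (1 - s)) * ∑ a, ∑ τ, w a τ / D w a τ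
          ≤ (16/15) * ∑ a, ∑ τ, w a τ / D w a τ :=
            mul_le_mul_of_nonneg_right h1 hSnn
        _ ≤ (16/15) * (((t:ℝ) - 1) * K) := by
            apply mul_le_mul_of_nonneg_left step3 (by norm_num)
    calc ∑ a, ∑ τ, z a τ / D w a τ ≤ (9/8) * ∑ a, ∑ τ, z a τ / D u a τ := step4
      _ ≤ (9/8) * ∑ a, ∑ τ, w a τ / D u a τ := by
          apply mul_le_mul_of_nonneg_left step1 (by norm_num)
      _ ≤ (9/8) * ((1 / (1 - s)) * ∑ a, ∑ τ, w a τ / D w a τ) := by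
          apply mul_le_mul_of_nonneg_left step2 (by norm_num)
      _ ≤ (9/8) * ((16/15) * (((t:ℝ) - 1) * K)) := by
          apply mul_le_mul_of_nonneg_left hfrac (by norm_num)
      _ = (6/5) * (((t:ℝ) - 1) * K) := by ring
  -- final arithmetic
  have htpos : (0:ℝ) < (t:ℝ) - 1 := by
    have : (2:ℝ) ≤ t := by exact_mod_cast ht
    linarith
  have hgoal : (∑ a, ∑ τ, z a τ / (δ / ↑K + (1 - δ) * w a τ))
      = ∑ a, ∑ τ, z a τ / D w a τ := by simp only [hD]
  rw [hgoal]
  calc (1 / ((t:ℝ) - 1)) * ∑ a, ∑ τ, z a τ / D w a τ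
      ≤ (1 / ((t:ℝ) - 1)) * ((6/5) * (((t:ℝ) - 1) * K)) :=
        mul_le_mul_of_nonneg_left hbound (by positivity)
    _ = (6/5) * K := by field_simp
    _ ≤ (4/3) * K := by nlinarith
end

section
/- Let C be a nonempty closed convex subset of R^n, let w ∉ C, and let w̃ be the Euclidean projection of w onto C. Then for every z in the hyperplane H = {z : ⟨z − w, w − w̃⟩ = 0}, the distance from z to C is at least the distance from w to C, i.e., d(z, C) ≥ ‖w − w̃‖. -/
open scoped RealInnerProductSpace

/-- **Separating hyperplane via projection.** If `w ∉ C` with `C` nonempty closed convex,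
`w̃` the Euclidean projection of `w` onto `C`, then every `z` in the hyperplane
`{z : ⟨z − w, w − w̃⟩ = 0}` satisfies `d(z, C) ≥ ‖w − w̃‖`. -/
theorem hyperplane_distance_ge_projection
    (n : ℕ) (C : Set (EuclideanSpace ℝ (Fin n)))
    (hne : C.Nonempty) (hclosed : IsClosed C) (hconv : Convex ℝ C)
    (w wt : EuclideanSpace ℝ (Fin n)) (hw : w ∉ C) (hwt : wt ∈ C)
    (hproj : ∀ c ∈ C, ‖w - wt‖ ≤ ‖w - c‖) :
    ∀ z : EuclideanSpace ℝ (Fin n), ⟪z - w, w - wt⟫ = 0 →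
      ‖w - wt‖ ≤ Metric.infDist z C := by
  intro z hz
  have hCne : Nonempty ↥C := hne.to_subtype
  -- projection characterization
  have hchar : ∀ c ∈ C, ⟪w - wt, c - wt⟫ ≤ 0 := by
    have heq : ‖w - wt‖ = ⨅ c : C, ‖w - c‖ := by
      apply le_antisymm
      · exact le_ciInf fun c => hproj c c.2
      · exact ciInf_le ⟨0, fun x ⟨c, hc⟩ => hc ▸ norm_nonneg _⟩ (⟨wt, hwt⟩ : C)
    exact (norm_eq_iInf_iff_real_inner_le_zero hconv hwt).mp heq
  have hpos : (0:ℝ) < ‖w - wt‖ := by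
    rw [norm_pos_iff, sub_ne_zero]
    rintro rfl; exact hw hwt
  rw [Metric.infDist_eq_iInf]
  apply le_ciInf
  rintro ⟨c, hc⟩
  simp only
  rw [dist_eq_norm]
  -- ⟪z - c, w - wt⟫ ≥ ‖w - wt‖²
  have key : ‖w - wt‖ ^ 2 ≤ ⟪z - c, w - wt⟫ := by
    have h1 : ⟪z - c, w - wt⟫ = ⟪z - w, w - wt⟫ + ⟪w - wt, w - wt⟫ - ⟪w - wt, c - wt⟫ := by
      simp only [inner_sub_left, inner_sub_right]
      have e1 := real_inner_comm w c
      have e2 := real_inner_comm c wt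
      have e3 := real_inner_comm wt w
      linarith
    rw [h1, hz, real_inner_self_eq_norm_sq]
    nlinarith [hchar c hc]
  have hcs : ⟪z - c, w - wt⟫ ≤ ‖z - c‖ * ‖w - wt‖ := real_inner_le_norm _ _
  nlinarith
end

section
/- Bernstein-style maximal inequality for finite families of martingales: let (F_i)_{i≤n} be a filtration, and for each j ∈ [N] let X_{i,j} be F_i-measurable with E[X_{i,j} | F_{i−1}] = 0 and |X_{i,j}| ≤ b a.s. Set M^j_n = (1/n) Σ_{i=1}^n X_{i,j} and σ²_{n,j} = (1/n) Σ_{i=1}^n E[X²_{i,j} | F_{i−1}]. Then for any event A with P(A) > 0 and any σ² > 0, E[ max_{j∈[N]} 1{σ²_{n,j} ≤ σ²} M^j_n | A ] ≤ 4 σ √( (1/n) log(1 + N/P(A)) ) + (8/3)(b/n) log(1 + N/P(A)). -/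
open MeasureTheory

lemma aux_exp_le_one_add_add_sq {x : ℝ} (hx : x ≤ 1) : Real.exp x ≤ 1 + x + x ^ 2 := by
  rcases le_or_gt x (-1) with h | h
  · have h1 : Real.exp x ≤ 1 := Real.exp_le_one_iff.2 (by linarith)
    nlinarith
  · have habs : |x| ≤ 1 := abs_le.2 ⟨h.le, hx⟩
    have h2 := Real.exp_bound habs (n := 2) (by norm_num)
    have h3 : ∑ m ∈ Finset.range 2, x ^ m / m.factorial = 1 + x := by
      simp [Finset.sum_range_succ]
    rw [h3] at h2
    have h4 : |x| ^ 2 = x ^ 2 := sq_abs x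
    have h5 := (abs_sub_le_iff.1 h2).1
    have h6 : ((Nat.succ 2 : ℕ) : ℝ) / (((Nat.factorial 2 : ℕ) : ℝ) * ((2:ℕ):ℝ)) = 3 / 4 := by
      norm_num [Nat.factorial]
    rw [h4, h6] at h5
    nlinarith [sq_nonneg x]

lemma aux_exists_ciSup_eq {N : ℕ} (hN : 1 ≤ N) (f : Fin N → ℝ) : ∃ j, (⨆ i, f i) = f j := by
  have : Nonempty (Fin N) := ⟨⟨0, hN⟩⟩
  obtain ⟨j, hj⟩ := Finite.exists_max f
  exact ⟨j, le_antisymm (ciSup_le hj) (le_ciSup (Set.Finite.bddAbove (Set.finite_range f)) j)⟩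

lemma aux_integrable_of_bound {Ω : Type*} [MeasurableSpace Ω] {P : Measure Ω}
    [IsFiniteMeasure P] {f : Ω → ℝ} (hm : AEStronglyMeasurable f P) (C : ℝ)
    (h : ∀ᵐ ω ∂P, ‖f ω‖ ≤ C) : Integrable f P :=
  ⟨hm, HasFiniteIntegral.of_bounded h⟩

lemma auxB {Ω : Type*} [m0 : MeasurableSpace Ω] (P : Measure Ω) [IsProbabilityMeasure P]
    {N : ℕ} (hN : 1 ≤ N) (Y : Fin N → Ω → ℝ)
    (hYm : ∀ j, StronglyMeasurable (Y j))
    (C : ℝ) (hYb : ∀ j, ∀ᵐ ω ∂P, |Y j ω| ≤ C)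
    (A : Set Ω) (hA : MeasurableSet A) (hA0 : P A ≠ 0)
    (t K : ℝ) (ht : 0 < t) (hK : 0 < K)
    (hmgf : ∀ j, ∫ ω, Real.exp (t * Y j ω) ∂P ≤ K) :
    (∫ ω in A, ⨆ j, Y j ω ∂P) / (P A).toReal ≤ Real.log (N * K / (P A).toReal) / t := by
  have hNe : Nonempty (Fin N) := ⟨⟨0, hN⟩⟩
  have hPA_pos : 0 < (P A).toReal := ENNReal.toReal_pos hA0 (measure_ne_top P A)
  set G : Ω → ℝ := fun ω => ⨆ j, Y j ω with hGdef
  -- measurability of G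
  have hG_eq : ∀ ω, G ω = (Finset.univ.sup' (Finset.univ_nonempty) Y) ω := by
    intro ω
    rw [hGdef]
    simp only [Finset.sup'_apply]
    rw [Finset.sup'_univ_eq_ciSup]
  have hGm : StronglyMeasurable G := by
    have : Measurable (Finset.univ.sup' (Finset.univ_nonempty) Y) :=
      Finset.measurable_sup' _ (fun j _ => (hYm j).measurable)
    have h2 : G = Finset.univ.sup' (Finset.univ_nonempty) Y := funext hG_eq
    rw [h2]
    exact this.stronglyMeasurable
  have hYb' : ∀ᵐ ω ∂P, ∀ j, |Y j ω| ≤ C := (ae_all_iff).2 hYb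
  have hGb : ∀ᵐ ω ∂P, |G ω| ≤ C := by
    filter_upwards [hYb'] with ω hω
    obtain ⟨j0, hj0⟩ := aux_exists_ciSup_eq hN (fun j => Y j ω)
    rw [hGdef]; simp only []; rw [hj0]; exact hω j0
  have hGint : Integrable G P :=
    aux_integrable_of_bound hGm.aestronglyMeasurable C (by simpa [Real.norm_eq_abs] using hGb)
  have hexpG_le : ∀ ω, Real.exp (t * G ω) ≤ ∑ j, Real.exp (t * Y j ω) := by
    intro ω
    obtain ⟨j0, hj0⟩ := aux_exists_ciSup_eq hN (fun j => Y j ω)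
    have : G ω = Y j0 ω := hj0
    rw [this]
    exact Finset.single_le_sum (f := fun j => Real.exp (t * Y j ω))
      (fun j _ => (Real.exp_pos _).le) (Finset.mem_univ j0)
  have hexpYint : ∀ j, Integrable (fun ω => Real.exp (t * Y j ω)) P := by
    intro j
    refine aux_integrable_of_bound
      ((Real.continuous_exp.comp (continuous_const.mul continuous_id)).comp_stronglyMeasurable
        (hYm j)).aestronglyMeasurable (Real.exp (t * C)) ?_
    filter_upwards [hYb j] with ω hω
    rw [Real.norm_eq_abs, abs_of_pos (Real.exp_pos _)]
    exact Real.exp_le_exp.2 (mul_le_mul_of_nonneg_left ((le_abs_self _).trans hω) ht.le)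
  have hexpGint : Integrable (fun ω => Real.exp (t * G ω)) P := by
    refine aux_integrable_of_bound
      ((Real.continuous_exp.comp (continuous_const.mul continuous_id)).comp_stronglyMeasurable
        hGm).aestronglyMeasurable (Real.exp (t * C)) ?_
    filter_upwards [hGb] with ω hω
    rw [Real.norm_eq_abs, abs_of_pos (Real.exp_pos _)]
    exact Real.exp_le_exp.2 (mul_le_mul_of_nonneg_left ((le_abs_self _).trans hω) ht.le)
  -- Jensen on the restricted measure
  set μ' := P.restrict A with hμ'def
  haveI : IsFiniteMeasure μ' := inferInstance
  haveI : NeZero μ' := ⟨by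
    simp only [hμ'def, Ne, Measure.restrict_eq_zero]
    exact hA0⟩
  have hjensen : Real.exp (⨍ ω, t * G ω ∂μ') ≤ ⨍ ω, Real.exp (t * G ω) ∂μ' := by
    refine convexOn_exp.map_average_le Real.continuous_exp.continuousOn isClosed_univ
      (Filter.Eventually.of_forall fun ω => Set.mem_univ _) ?_ ?_
    · exact (hGint.restrict.const_mul t)
    · exact hexpGint.restrict
  have hμ'univ : (μ' Set.univ).toReal = (P A).toReal := by
    rw [hμ'def, Measure.restrict_apply_univ]
  have havg1 : ⨍ ω, t * G ω ∂μ' = t * ((∫ ω in A, G ω ∂P) / (P A).toReal) := by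
    rw [average_eq, measureReal_def, hμ'univ, integral_const_mul, smul_eq_mul]
    ring
  have havg2 : ⨍ ω, Real.exp (t * G ω) ∂μ' ≤ N * K / (P A).toReal := by
    rw [average_eq, measureReal_def, hμ'univ, smul_eq_mul]
    have h1 : ∫ ω in A, Real.exp (t * G ω) ∂P ≤ ∫ ω, Real.exp (t * G ω) ∂P :=
      setIntegral_le_integral hexpGint (Filter.Eventually.of_forall fun ω => (Real.exp_pos _).le)
    have h2 : ∫ ω, Real.exp (t * G ω) ∂P ≤ ∑ j, ∫ ω, Real.exp (t * Y j ω) ∂P := by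
      rw [← integral_finset_sum _ (fun j _ => hexpYint j)]
      exact integral_mono hexpGint (integrable_finset_sum _ (fun j _ => hexpYint j)) hexpG_le
    have h3 : ∑ j, ∫ ω, Real.exp (t * Y j ω) ∂P ≤ N * K := by
      calc ∑ j : Fin N, ∫ ω, Real.exp (t * Y j ω) ∂P ≤ ∑ _j : Fin N, K :=
            Finset.sum_le_sum fun j _ => hmgf j
        _ = N * K := by simp [Finset.sum_const, nsmul_eq_mul]
    rw [div_eq_inv_mul]
    exact mul_le_mul_of_nonneg_left (h1.trans (h2.trans h3)) (by positivity)
  have hfinal : Real.exp (t * ((∫ ω in A, G ω ∂P) / (P A).toReal)) ≤ N * K / (P A).toReal := by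
    rw [← havg1]; exact hjensen.trans havg2
  have hNK : 0 < (N : ℝ) * K / (P A).toReal := by
    have : (0:ℝ) < N := by exact_mod_cast hN
    positivity
  have := (Real.le_log_iff_exp_le hNK).2 hfinal
  rw [le_div_iff₀ ht]
  linarith [this]

lemma auxC {Ω : Type*} [m0 : MeasurableSpace Ω] (P : Measure Ω) [IsProbabilityMeasure P]
    (ℱ : ℕ → MeasurableSpace Ω) (hle : ∀ i, ℱ i ≤ m0) (hmono : Monotone ℱ) (n : ℕ)
    (b lam : ℝ) (hb : 0 ≤ b) (hlam : 0 ≤ lam) (hlamb : lam * b ≤ 1)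
    (X : ℕ → Ω → ℝ)
    (hadapt : ∀ i ∈ Finset.Icc 1 n, StronglyMeasurable[ℱ i] (X i))
    (hmart : ∀ i ∈ Finset.Icc 1 n, P[X i|ℱ (i - 1)] =ᵐ[P] 0)
    (hbdd : ∀ i ∈ Finset.Icc 1 n, ∀ᵐ ω ∂P, |X i ω| ≤ b) :
    ∫ ω, ∏ i ∈ Finset.Icc 1 n,
        Real.exp (lam * X i ω - lam ^ 2 * (P[fun ω' => X i ω' ^ 2|ℱ (i - 1)]) ω) ∂P ≤ 1 := by
  classical
  -- basic measurability / integrability facts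
  have hXm : ∀ i ∈ Finset.Icc 1 n, StronglyMeasurable (X i) :=
    fun i hi => (hadapt i hi).mono (hle i)
  have hXint : ∀ i ∈ Finset.Icc 1 n, Integrable (X i) P := by
    intro i hi
    exact aux_integrable_of_bound (hXm i hi).aestronglyMeasurable b
      (by simpa [Real.norm_eq_abs] using hbdd i hi)
  have hX2int : ∀ i ∈ Finset.Icc 1 n, Integrable (fun ω => X i ω ^ 2) P := by
    intro i hi
    refine aux_integrable_of_bound ((hXm i hi).pow 2).aestronglyMeasurable (b ^ 2) ?_
    filter_upwards [hbdd i hi] with ω hω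
    rw [Real.norm_eq_abs, abs_pow]
    exact pow_le_pow_left₀ (abs_nonneg _) hω 2
  have hv_nonneg : ∀ i ∈ Finset.Icc 1 n, 0 ≤ᵐ[P] P[fun ω' => X i ω' ^ 2|ℱ (i - 1)] :=
    fun i _ => condExp_nonneg (Filter.Eventually.of_forall fun ω => sq_nonneg _)
  have hv_le : ∀ i ∈ Finset.Icc 1 n,
      P[fun ω' => X i ω' ^ 2|ℱ (i - 1)] ≤ᵐ[P] fun _ => b ^ 2 := by
    intro i hi
    have h1 : (fun ω => X i ω ^ 2) ≤ᵐ[P] fun _ => b ^ 2 := by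
      filter_upwards [hbdd i hi] with ω hω
      calc X i ω ^ 2 = |X i ω| ^ 2 := (sq_abs _).symm
        _ ≤ b ^ 2 := pow_le_pow_left₀ (abs_nonneg _) hω 2
    have h2 := condExp_mono (m := ℱ (i - 1)) (hX2int i hi) (integrable_const (b ^ 2)) h1
    have h3 : P[fun _ : Ω => b ^ 2|ℱ (i - 1)] = fun _ => b ^ 2 := condExp_const (hle _) _
    rw [h3] at h2
    exact h2
  have hv_sm : ∀ i, StronglyMeasurable[ℱ (i - 1)] (P[fun ω' => X i ω' ^ 2|ℱ (i - 1)]) :=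
    fun i => stronglyMeasurable_condExp
  -- the conditional mgf bound
  have hmgf : ∀ i ∈ Finset.Icc 1 n,
      P[fun ω => Real.exp (lam * X i ω)|ℱ (i - 1)] ≤ᵐ[P]
        fun ω => Real.exp (lam ^ 2 * (P[fun ω' => X i ω' ^ 2|ℱ (i - 1)]) ω) := by
    intro i hi
    have hexp_int : Integrable (fun ω => Real.exp (lam * X i ω)) P := by
      refine aux_integrable_of_bound ((Real.continuous_exp.comp
        (continuous_const.mul continuous_id)).comp_stronglyMeasurable
        (hXm i hi)).aestronglyMeasurable (Real.exp (lam * b)) ?_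
      filter_upwards [hbdd i hi] with ω hω
      rw [Real.norm_eq_abs, abs_of_pos (Real.exp_pos _)]
      exact Real.exp_le_exp.2 (mul_le_mul_of_nonneg_left ((le_abs_self _).trans hω) hlam)
    have hrhs_int : Integrable (fun ω => 1 + lam * X i ω + lam ^ 2 * X i ω ^ 2) P := by
      exact (integrable_const 1 |>.add ((hXint i hi).const_mul lam)).add
        ((hX2int i hi).const_mul (lam ^ 2))
    have hae1 : (fun ω => Real.exp (lam * X i ω)) ≤ᵐ[P]
        fun ω => 1 + lam * X i ω + lam ^ 2 * X i ω ^ 2 := by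
      filter_upwards [hbdd i hi] with ω hω
      have hx1 : lam * X i ω ≤ 1 := by
        calc lam * X i ω ≤ lam * b :=
              mul_le_mul_of_nonneg_left ((le_abs_self _).trans hω) hlam
          _ ≤ 1 := hlamb
      have := aux_exp_le_one_add_add_sq hx1
      calc Real.exp (lam * X i ω) ≤ 1 + lam * X i ω + (lam * X i ω) ^ 2 := this
        _ = 1 + lam * X i ω + lam ^ 2 * X i ω ^ 2 := by ring
    have h1 := condExp_mono (m := ℱ (i - 1)) hexp_int hrhs_int hae1
    have h2 : P[fun ω => 1 + lam * X i ω + lam ^ 2 * X i ω ^ 2|ℱ (i - 1)] =ᵐ[P]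
        fun ω => 1 + lam ^ 2 * (P[fun ω' => X i ω' ^ 2|ℱ (i - 1)]) ω := by
      have ha := condExp_add (μ := P) (m := ℱ (i - 1))
        ((integrable_const (1:ℝ)).add ((hXint i hi).const_mul lam))
        ((hX2int i hi).const_mul (lam ^ 2))
      have hb' := condExp_add (μ := P) (m := ℱ (i - 1))
        (integrable_const (1:ℝ)) ((hXint i hi).const_mul lam)
      have hc : P[fun ω => lam * X i ω|ℱ (i - 1)] =ᵐ[P] fun ω => lam * (P[X i|ℱ (i - 1)]) ω := by
        simpa [Pi.smul_def, smul_eq_mul] using condExp_smul (μ := P) (m := ℱ (i - 1)) lam (X i)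
      have hd : P[fun ω => lam ^ 2 * X i ω ^ 2|ℱ (i - 1)] =ᵐ[P]
          fun ω => lam ^ 2 * (P[fun ω' => X i ω' ^ 2|ℱ (i - 1)]) ω := by
        simpa [Pi.smul_def, smul_eq_mul] using
          condExp_smul (μ := P) (m := ℱ (i - 1)) (lam ^ 2) (fun ω => X i ω ^ 2)
      have hconst : P[fun _ : Ω => (1:ℝ)|ℱ (i - 1)] = fun _ => (1:ℝ) := condExp_const (hle _) _
      filter_upwards [ha, hb', hc, hd, hmart i hi] with ω ha hb' hc hd hm
      have e1 : (P[fun ω => 1 + lam * X i ω + lam ^ 2 * X i ω ^ 2|ℱ (i - 1)]) ω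
          = (P[(fun _ : Ω => (1:ℝ)) + fun x => lam * X i x|ℱ (i - 1)]
             + P[fun x => lam ^ 2 * X i x ^ 2|ℱ (i - 1)]) ω := ha
      rw [e1, Pi.add_apply, hb', Pi.add_apply, hconst, hc, hd, hm]
      simp
    have h3 : (fun ω => 1 + lam ^ 2 * (P[fun ω' => X i ω' ^ 2|ℱ (i - 1)]) ω) ≤ᵐ[P]
        fun ω => Real.exp (lam ^ 2 * (P[fun ω' => X i ω' ^ 2|ℱ (i - 1)]) ω) := by
      refine Filter.Eventually.of_forall fun ω => ?_
      have := Real.add_one_le_exp (lam ^ 2 * (P[fun ω' => X i ω' ^ 2|ℱ (i - 1)]) ω)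
      dsimp only
      linarith
    calc P[fun ω => Real.exp (lam * X i ω)|ℱ (i - 1)]
        ≤ᵐ[P] P[fun ω => 1 + lam * X i ω + lam ^ 2 * X i ω ^ 2|ℱ (i - 1)] := h1
      _ =ᵐ[P] fun ω => 1 + lam ^ 2 * (P[fun ω' => X i ω' ^ 2|ℱ (i - 1)]) ω := h2
      _ ≤ᵐ[P] fun ω => Real.exp (lam ^ 2 * (P[fun ω' => X i ω' ^ 2|ℱ (i - 1)]) ω) := h3
  -- global a.e. bounds
  have hglob : ∀ᵐ ω ∂P, ∀ i ∈ Finset.Icc 1 n,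
      |X i ω| ≤ b ∧ 0 ≤ (P[fun ω' => X i ω' ^ 2|ℱ (i - 1)]) ω := by
    rw [Filter.eventually_all_finset]
    intro i hi
    filter_upwards [hbdd i hi, hv_nonneg i hi] with ω h1 h2
    exact ⟨h1, h2⟩
  have key : ∀ k, k ≤ n → ∫ ω, ∏ i ∈ Finset.Icc 1 k,
      Real.exp (lam * X i ω - lam ^ 2 * (P[fun ω' => X i ω' ^ 2|ℱ (i - 1)]) ω) ∂P ≤ 1 := by
    intro k
    induction k with
    | zero =>
      intro _
      simp
    | succ k ih =>
      intro hk1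
      have hkn : k ≤ n := Nat.le_of_succ_le hk1
      have hik : k + 1 ∈ Finset.Icc 1 n :=
        Finset.mem_Icc.2 ⟨Nat.succ_le_succ (Nat.zero_le k), hk1⟩
      have ihk := ih hkn
      simp only [Finset.prod_Icc_succ_top (Nat.succ_le_succ (Nat.zero_le k)),
        Nat.add_sub_cancel]
      set v1 : Ω → ℝ := P[fun ω' => X (k+1) ω' ^ 2|ℱ k] with hv1def
      set Zk : Ω → ℝ := fun ω => ∏ i ∈ Finset.Icc 1 k,
        Real.exp (lam * X i ω - lam ^ 2 * (P[fun ω' => X i ω' ^ 2|ℱ (i - 1)]) ω) with hZkdef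
      have hmgf1 : P[fun ω => Real.exp (lam * X (k+1) ω)|ℱ k] ≤ᵐ[P]
          fun ω => Real.exp (lam ^ 2 * v1 ω) := by
        have := hmgf (k+1) hik
        simpa only [Nat.add_sub_cancel] using this
      have hv1_le : v1 ≤ᵐ[P] fun _ => b ^ 2 := by
        have := hv_le (k+1) hik
        simpa only [Nat.add_sub_cancel] using this
      have hv1_nonneg : (0:Ω → ℝ) ≤ᵐ[P] v1 := by
        have := hv_nonneg (k+1) hik
        simpa only [Nat.add_sub_cancel] using this
      set F : Ω → ℝ := fun ω => Zk ω * Real.exp (-(lam ^ 2) * v1 ω) with hFdef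
      set g : Ω → ℝ := fun ω => Real.exp (lam * X (k+1) ω) with hgdef
      -- measurability
      have hZk_sm : StronglyMeasurable[ℱ k] Zk := by
        refine Finset.stronglyMeasurable_fun_prod _ (fun i hi => ?_)
        have hik' : i ≤ k := (Finset.mem_Icc.1 hi).2
        have hXi : StronglyMeasurable[ℱ k] (X i) :=
          (hadapt i (Finset.mem_Icc.2 ⟨(Finset.mem_Icc.1 hi).1, hik'.trans hkn⟩)).mono
            (hmono hik')
        have hvi : StronglyMeasurable[ℱ k] (P[fun ω' => X i ω' ^ 2|ℱ (i - 1)]) :=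
          stronglyMeasurable_condExp.mono (hmono ((Nat.sub_le i 1).trans hik'))
        exact Real.continuous_exp.comp_stronglyMeasurable
          ((hXi.const_mul lam).sub (hvi.const_mul (lam ^ 2)))
      have hv1_sm : StronglyMeasurable[ℱ k] v1 := stronglyMeasurable_condExp
      have hF_sm : StronglyMeasurable[ℱ k] F :=
        hZk_sm.mul (Real.continuous_exp.comp_stronglyMeasurable (hv1_sm.const_mul _))
      have hZk_nonneg : ∀ ω, 0 ≤ Zk ω :=
        fun ω => Finset.prod_nonneg fun i _ => (Real.exp_pos _).le
      have hF_nonneg : ∀ ω, 0 ≤ F ω :=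
        fun ω => mul_nonneg (hZk_nonneg ω) (Real.exp_pos _).le
      have hZk_bdd : ∀ᵐ ω ∂P, Zk ω ≤ Real.exp (lam * b) ^ k := by
        filter_upwards [hglob] with ω hω
        have : Zk ω ≤ ∏ _i ∈ Finset.Icc 1 k, Real.exp (lam * b) := by
          refine Finset.prod_le_prod (fun i _ => (Real.exp_pos _).le) (fun i hi => ?_)
          have hi' : i ∈ Finset.Icc 1 n := Finset.mem_Icc.2
            ⟨(Finset.mem_Icc.1 hi).1, (Finset.mem_Icc.1 hi).2.trans hkn⟩
          obtain ⟨h1, h2⟩ := hω i hi'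
          refine Real.exp_le_exp.2 ?_
          have : lam * X i ω ≤ lam * b :=
            mul_le_mul_of_nonneg_left ((le_abs_self _).trans h1) hlam
          nlinarith [sq_nonneg lam]
        simpa [Finset.prod_const, Nat.card_Icc] using this
      have hF_bdd : ∀ᵐ ω ∂P, ‖F ω‖ ≤ Real.exp (lam * b) ^ k := by
        filter_upwards [hZk_bdd, hv1_nonneg] with ω h1 h2
        rw [Real.norm_eq_abs, abs_of_nonneg (hF_nonneg ω)]
        have h3 : Real.exp (-(lam ^ 2) * v1 ω) ≤ 1 := by
          rw [Real.exp_le_one_iff]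
          have : (0:ℝ) ≤ v1 ω := h2
          nlinarith [sq_nonneg lam]
        calc Zk ω * Real.exp (-(lam ^ 2) * v1 ω) ≤ Zk ω * 1 :=
              mul_le_mul_of_nonneg_left h3 (hZk_nonneg ω)
          _ ≤ Real.exp (lam * b) ^ k := by rw [mul_one]; exact h1
      have hg_int : Integrable g P := by
        refine aux_integrable_of_bound ((Real.continuous_exp.comp
          (continuous_const.mul continuous_id)).comp_stronglyMeasurable
          ((hadapt (k+1) hik).mono (hle _))).aestronglyMeasurable (Real.exp (lam * b)) ?_
        filter_upwards [hbdd (k+1) hik] with ω hω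
        rw [Real.norm_eq_abs, abs_of_pos (Real.exp_pos _)]
        exact Real.exp_le_exp.2 (mul_le_mul_of_nonneg_left ((le_abs_self _).trans hω) hlam)
      have hZk_int : Integrable Zk P := by
        refine aux_integrable_of_bound ((hZk_sm.mono (hle k)).aestronglyMeasurable)
          (Real.exp (lam * b) ^ k) ?_
        filter_upwards [hZk_bdd] with ω h1
        rw [Real.norm_eq_abs, abs_of_nonneg (hZk_nonneg ω)]; exact h1
      have hFg_int : Integrable (F * g) P := by
        refine aux_integrable_of_bound
          (((hF_sm.mono (hle k)).mul ((Real.continuous_exp.comp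
            (continuous_const.mul continuous_id)).comp_stronglyMeasurable
            ((hadapt (k+1) hik).mono (hle _)))).aestronglyMeasurable)
          (Real.exp (lam * b) ^ k * Real.exp (lam * b)) ?_
        filter_upwards [hF_bdd, hbdd (k+1) hik] with ω h1 h2
        rw [Pi.mul_apply, Real.norm_eq_abs, abs_mul]
        have hg_le : |g ω| ≤ Real.exp (lam * b) := by
          rw [hgdef, abs_of_pos (Real.exp_pos _)]
          exact Real.exp_le_exp.2 (mul_le_mul_of_nonneg_left ((le_abs_self _).trans h2) hlam)
        have h1' : |F ω| ≤ Real.exp (lam * b) ^ k := by rwa [Real.norm_eq_abs] at h1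
        exact mul_le_mul h1' hg_le (abs_nonneg _) (by positivity)
      haveI : SigmaFinite (P.trim (hle k)) := inferInstance
      have hpull : P[F * g|ℱ k] =ᵐ[P] F * P[g|ℱ k] :=
        condExp_stronglyMeasurable_mul_of_bound (hle k) hF_sm hg_int
          (Real.exp (lam * b) ^ k) hF_bdd
      have hcond_nonneg : (0:Ω → ℝ) ≤ᵐ[P] P[g|ℱ k] :=
        condExp_nonneg (Filter.Eventually.of_forall fun ω => (Real.exp_pos _).le)
      have hcond_bdd : P[g|ℱ k] ≤ᵐ[P] fun _ => Real.exp (lam ^ 2 * b ^ 2) := by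
        filter_upwards [hmgf1, hv1_le] with ω h1 h2
        refine h1.trans (Real.exp_le_exp.2 ?_)
        exact mul_le_mul_of_nonneg_left h2 (sq_nonneg lam)
      have hFP_int : Integrable (F * P[g|ℱ k]) P := by
        refine aux_integrable_of_bound
          ((hF_sm.mono (hle k)).aestronglyMeasurable.mul
            (stronglyMeasurable_condExp.mono (hle k)).aestronglyMeasurable)
          (Real.exp (lam * b) ^ k * Real.exp (lam ^ 2 * b ^ 2)) ?_
        filter_upwards [hF_bdd, hcond_nonneg, hcond_bdd] with ω h1 h2 h3
        rw [Pi.mul_apply, Real.norm_eq_abs, abs_mul]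
        have h1' : |F ω| ≤ Real.exp (lam * b) ^ k := by rwa [Real.norm_eq_abs] at h1
        have h3' : |(P[g|ℱ k]) ω| ≤ Real.exp (lam ^ 2 * b ^ 2) := by
          rw [abs_of_nonneg h2]; exact h3
        exact mul_le_mul h1' h3' (abs_nonneg _) (by positivity)
      have hae_le : F * P[g|ℱ k] ≤ᵐ[P] Zk := by
        filter_upwards [hmgf1] with ω h1
        rw [Pi.mul_apply]
        calc F ω * (P[g|ℱ k]) ω ≤ F ω * Real.exp (lam ^ 2 * v1 ω) :=
              mul_le_mul_of_nonneg_left h1 (hF_nonneg ω)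
          _ = Zk ω * (Real.exp (-(lam ^ 2) * v1 ω) * Real.exp (lam ^ 2 * v1 ω)) := by
              rw [hFdef]; ring
          _ = Zk ω := by
              rw [← Real.exp_add]
              ring_nf
              rw [Real.exp_zero, mul_one]
      have hgoal_eq : (fun ω => Zk ω * Real.exp (lam * X (k+1) ω - lam ^ 2 * v1 ω))
          = F * g := by
        funext ω
        rw [Pi.mul_apply, hFdef, hgdef, mul_assoc, ← Real.exp_add]
        ring_nf
      rw [hgoal_eq]
      calc ∫ ω, (F * g) ω ∂P = ∫ ω, (P[F * g|ℱ k]) ω ∂P :=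
            (integral_condExp (hle k) (f := F * g)).symm
        _ = ∫ ω, (F * P[g|ℱ k]) ω ∂P := integral_congr_ae hpull
        _ ≤ ∫ ω, Zk ω ∂P := integral_mono_ae hFP_int hZk_int hae_le
        _ ≤ 1 := ihk
  exact key n le_rfl


set_option maxHeartbeats 2000000

/-- **Bernstein-style maximal inequality for finite families of martingales** (Lemma:
Bernstein-like maximal inequality for finite sets). For martingale-difference arrays
`X i j` bounded by `b`, with `M^j_n = (1/n) Σ_i X i j` and conditional variance
`σ²_{n,j} = (1/n) Σ_i E[X²_{i,j} | F_{i−1}]`, for any event `A` of positive probability,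
`E[ max_j 1{σ²_{n,j} ≤ σ²} M^j_n | A ]
  ≤ 4 σ √((1/n) log(1 + N/P(A))) + (8/3)(b/n) log(1 + N/P(A))`. -/
theorem bernstein_maximal_inequality_finite
    {Ω : Type*} [m0 : MeasurableSpace Ω] (P : Measure Ω) [IsProbabilityMeasure P]
    (ℱ : ℕ → MeasurableSpace Ω) (hle : ∀ i, ℱ i ≤ m0) (hmono : Monotone ℱ)
    (n N : ℕ) (hn : 1 ≤ n) (hN : 1 ≤ N)
    (b : ℝ) (hb : 0 ≤ b) (X : ℕ → Fin N → Ω → ℝ)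
    (hadapt : ∀ i ∈ Finset.Icc 1 n, ∀ j, StronglyMeasurable[ℱ i] (X i j))
    (hmart : ∀ i ∈ Finset.Icc 1 n, ∀ j, P[X i j|ℱ (i - 1)] =ᵐ[P] 0)
    (hbdd : ∀ i ∈ Finset.Icc 1 n, ∀ j, ∀ᵐ ω ∂P, |X i j ω| ≤ b)
    (A : Set Ω) (hA : MeasurableSet A) (hA0 : P A ≠ 0)
    (σ2 : ℝ) (hσ2 : 0 < σ2) :
    (∫ ω in A, ⨆ j : Fin N,
        (if (1 / (n : ℝ)) * ∑ i ∈ Finset.Icc 1 n,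
              (P[fun ω' => (X i j ω') ^ 2|ℱ (i - 1)]) ω ≤ σ2
          then (1 / (n : ℝ)) * ∑ i ∈ Finset.Icc 1 n, X i j ω else 0) ∂P) / (P A).toReal ≤
      4 * Real.sqrt σ2 * Real.sqrt ((1 / (n : ℝ)) * Real.log (1 + N / (P A).toReal)) +
        (8 / 3) * (b / n) * Real.log (1 + N / (P A).toReal) := by
  classical
  have hNe : Nonempty (Fin N) := ⟨⟨0, hN⟩⟩
  have hn0 : (0:ℝ) < n := by exact_mod_cast hn
  have hPA_pos : 0 < (P A).toReal := ENNReal.toReal_pos hA0 (measure_ne_top P A)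
  have hPA_le_one : (P A).toReal ≤ 1 := by
    have h1 : P A ≤ 1 := prob_le_one
    have := ENNReal.toReal_mono (by norm_num) h1
    simpa using this
  set L := Real.log (1 + N / (P A).toReal) with hLdef
  have hNPA : (1:ℝ) ≤ N / (P A).toReal := by
    rw [le_div_iff₀ hPA_pos]
    have h1 : (1:ℝ) ≤ N := by exact_mod_cast hN
    linarith
  have hL_pos : 0 < L := Real.log_pos (by linarith)
  set s := Real.sqrt σ2 with hsdef
  have hs_pos : 0 < s := Real.sqrt_pos.2 hσ2
  have hs_sq : s ^ 2 = σ2 := Real.sq_sqrt hσ2.le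
  set q := Real.sqrt (2 * L / n) with hqdef
  have hq_pos : 0 < q := Real.sqrt_pos.2 (by positivity)
  have hq_sq : q ^ 2 = 2 * L / n := Real.sq_sqrt (by positivity)
  set c1 := q / s with hc1def
  have hc1_pos : 0 < c1 := div_pos hq_pos hs_pos
  set lam := if b = 0 then c1 else min c1 (1 / b) with hlamdef
  have hbpos : b ≠ 0 → 0 < b := fun h => lt_of_le_of_ne hb (Ne.symm h)
  have hlam_pos : 0 < lam := by
    rw [hlamdef]; split_ifs with h
    · exact hc1_pos
    · exact lt_min hc1_pos (by have := hbpos h; positivity)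
  have hlam_le_c1 : lam ≤ c1 := by
    rw [hlamdef]; split_ifs with h
    · exact le_rfl
    · exact min_le_left _ _
  have hlamb : lam * b ≤ 1 := by
    rw [hlamdef]; split_ifs with h
    · simp [h]
    · have hb' := hbpos h
      calc (min c1 (1/b)) * b ≤ (1/b) * b :=
            mul_le_mul_of_nonneg_right (min_le_right _ _) hb
        _ = 1 := one_div_mul_cancel h
  -- measurability and boundedness of the truncated averages
  have hYm : ∀ j : Fin N, StronglyMeasurable (fun ω =>
      (if (1 / (n : ℝ)) * ∑ i ∈ Finset.Icc 1 n,
            (P[fun ω' => (X i j ω') ^ 2|ℱ (i - 1)]) ω ≤ σ2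
        then (1 / (n : ℝ)) * ∑ i ∈ Finset.Icc 1 n, X i j ω else 0)) := by
    intro j
    have hsum : Measurable (fun ω => (1 / (n : ℝ)) * ∑ i ∈ Finset.Icc 1 n,
        (P[fun ω' => (X i j ω') ^ 2|ℱ (i - 1)]) ω) := by
      refine (Finset.measurable_sum _ (fun i _ => ?_)).const_mul _
      exact (stronglyMeasurable_condExp.mono (hle _)).measurable
    have hset : MeasurableSet {ω | (1 / (n : ℝ)) * ∑ i ∈ Finset.Icc 1 n,
        (P[fun ω' => (X i j ω') ^ 2|ℱ (i - 1)]) ω ≤ σ2} :=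
      measurableSet_le hsum measurable_const
    have hval : Measurable (fun ω => (1 / (n : ℝ)) * ∑ i ∈ Finset.Icc 1 n, X i j ω) := by
      refine (Finset.measurable_sum _ (fun i hi => ?_)).const_mul _
      exact ((hadapt i hi j).mono (hle i)).measurable
    exact (Measurable.ite hset hval measurable_const).stronglyMeasurable
  have hYb : ∀ j : Fin N, ∀ᵐ ω ∂P, |(if (1 / (n : ℝ)) * ∑ i ∈ Finset.Icc 1 n,
            (P[fun ω' => (X i j ω') ^ 2|ℱ (i - 1)]) ω ≤ σ2
        then (1 / (n : ℝ)) * ∑ i ∈ Finset.Icc 1 n, X i j ω else 0)| ≤ b := by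
    intro j
    have hball : ∀ᵐ ω ∂P, ∀ i ∈ Finset.Icc 1 n, |X i j ω| ≤ b :=
      (Filter.eventually_all_finset (Finset.Icc 1 n)).2 (fun i hi => hbdd i hi j)
    filter_upwards [hball] with ω hω
    split_ifs with hcond
    · have h1 : |∑ i ∈ Finset.Icc 1 n, X i j ω| ≤ (n : ℝ) * b := by
        calc |∑ i ∈ Finset.Icc 1 n, X i j ω| ≤ ∑ i ∈ Finset.Icc 1 n, |X i j ω| :=
              Finset.abs_sum_le_sum_abs _ _
          _ ≤ ∑ _i ∈ Finset.Icc 1 n, b := Finset.sum_le_sum hω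
          _ = (n : ℝ) * b := by simp [Finset.sum_const, Nat.card_Icc, nsmul_eq_mul]
      rw [abs_mul, abs_of_pos (by positivity : (0:ℝ) < 1 / n)]
      calc 1 / (n:ℝ) * |∑ i ∈ Finset.Icc 1 n, X i j ω| ≤ 1 / (n:ℝ) * ((n:ℝ) * b) :=
            mul_le_mul_of_nonneg_left h1 (by positivity)
        _ = b := by field_simp
    · simpa using hb
  have ht_pos : 0 < lam * n := mul_pos hlam_pos hn0
  have hK_pos : 0 < 2 * Real.exp (lam ^ 2 * n * σ2) := by positivity
  -- the mgf bound for each j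
  have hmgfY : ∀ j : Fin N, ∫ ω, Real.exp ((lam * n) *
      (if (1 / (n : ℝ)) * ∑ i ∈ Finset.Icc 1 n,
            (P[fun ω' => (X i j ω') ^ 2|ℱ (i - 1)]) ω ≤ σ2
        then (1 / (n : ℝ)) * ∑ i ∈ Finset.Icc 1 n, X i j ω else 0)) ∂P ≤
      2 * Real.exp (lam ^ 2 * n * σ2) := by
    intro j
    have hZle : ∫ ω, (∏ i ∈ Finset.Icc 1 n, Real.exp (lam * X i j ω -
        lam ^ 2 * (P[fun ω' => X i j ω' ^ 2|ℱ (i - 1)]) ω)) ∂P ≤ 1 :=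
      auxC P ℱ hle hmono n b lam hb hlam_pos.le hlamb (fun i => X i j)
        (fun i hi => hadapt i hi j) (fun i hi => hmart i hi j) (fun i hi => hbdd i hi j)
    set Zn : Ω → ℝ := fun ω => ∏ i ∈ Finset.Icc 1 n,
      Real.exp (lam * X i j ω - lam ^ 2 * (P[fun ω' => X i j ω' ^ 2|ℱ (i - 1)]) ω) with hZndef
    have hZn_nonneg : ∀ ω, 0 ≤ Zn ω :=
      fun ω => Finset.prod_nonneg fun i _ => (Real.exp_pos _).le
    have hZn_sm : StronglyMeasurable Zn := by
      refine Finset.stronglyMeasurable_fun_prod _ (fun i hi => ?_)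
      exact Real.continuous_exp.comp_stronglyMeasurable
        ((((hadapt i hi j).mono (hle i)).const_mul lam).sub
          ((stronglyMeasurable_condExp.mono (hle _)).const_mul (lam ^ 2)))
    have hglob : ∀ᵐ ω ∂P, ∀ i ∈ Finset.Icc 1 n, |X i j ω| ≤ b ∧
        0 ≤ (P[fun ω' => X i j ω' ^ 2|ℱ (i - 1)]) ω := by
      rw [Filter.eventually_all_finset]
      intro i hi
      have hnn : (0:Ω → ℝ) ≤ᵐ[P] P[fun ω' => X i j ω' ^ 2|ℱ (i - 1)] :=
        condExp_nonneg (Filter.Eventually.of_forall fun ω => sq_nonneg _)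
      filter_upwards [hbdd i hi j, hnn] with ω h1 h2
      exact ⟨h1, h2⟩
    have hZn_bdd : ∀ᵐ ω ∂P, Zn ω ≤ Real.exp (lam * b) ^ n := by
      filter_upwards [hglob] with ω hω
      have : Zn ω ≤ ∏ _i ∈ Finset.Icc 1 n, Real.exp (lam * b) := by
        refine Finset.prod_le_prod (fun i _ => (Real.exp_pos _).le) (fun i hi => ?_)
        obtain ⟨h1, h2⟩ := hω i hi
        refine Real.exp_le_exp.2 ?_
        have h3 : lam * X i j ω ≤ lam * b :=
          mul_le_mul_of_nonneg_left ((le_abs_self _).trans h1) hlam_pos.le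
        nlinarith [sq_nonneg lam]
      simpa [Finset.prod_const, Nat.card_Icc] using this
    have hZn_int : Integrable Zn P := by
      refine aux_integrable_of_bound hZn_sm.aestronglyMeasurable (Real.exp (lam * b) ^ n) ?_
      filter_upwards [hZn_bdd] with ω h1
      rw [Real.norm_eq_abs, abs_of_nonneg (hZn_nonneg ω)]
      exact h1
    have hpt : ∀ ω, Real.exp ((lam * n) *
        (if (1 / (n : ℝ)) * ∑ i ∈ Finset.Icc 1 n,
              (P[fun ω' => (X i j ω') ^ 2|ℱ (i - 1)]) ω ≤ σ2
          then (1 / (n : ℝ)) * ∑ i ∈ Finset.Icc 1 n, X i j ω else 0)) ≤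
        (Zn ω + 1) * Real.exp (lam ^ 2 * n * σ2) := by
      intro ω
      have hC1 : (1:ℝ) ≤ Real.exp (lam ^ 2 * n * σ2) := Real.one_le_exp (by positivity)
      by_cases hcond : (1 / (n : ℝ)) * ∑ i ∈ Finset.Icc 1 n,
          (P[fun ω' => (X i j ω') ^ 2|ℱ (i - 1)]) ω ≤ σ2
      · rw [if_pos hcond]
        have he : (lam * n) * ((1 / (n:ℝ)) * ∑ i ∈ Finset.Icc 1 n, X i j ω)
            = lam * ∑ i ∈ Finset.Icc 1 n, X i j ω := by
          field_simp
        rw [he]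
        have hprod : Real.exp (lam * ∑ i ∈ Finset.Icc 1 n, X i j ω) = Zn ω *
            Real.exp (lam ^ 2 * ∑ i ∈ Finset.Icc 1 n,
              (P[fun ω' => (X i j ω') ^ 2|ℱ (i - 1)]) ω) := by
          show Real.exp (lam * ∑ i ∈ Finset.Icc 1 n, X i j ω) =
            (∏ i ∈ Finset.Icc 1 n, Real.exp (lam * X i j ω -
              lam ^ 2 * (P[fun ω' => X i j ω' ^ 2|ℱ (i - 1)]) ω)) *
            Real.exp (lam ^ 2 * ∑ i ∈ Finset.Icc 1 n,
              (P[fun ω' => (X i j ω') ^ 2|ℱ (i - 1)]) ω)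
          rw [← Real.exp_sum, ← Real.exp_add]
          congr 1
          rw [Finset.sum_sub_distrib, ← Finset.mul_sum, ← Finset.mul_sum]
          ring
        rw [hprod]
        have hsv : ∑ i ∈ Finset.Icc 1 n, (P[fun ω' => (X i j ω') ^ 2|ℱ (i - 1)]) ω ≤
            (n:ℝ) * σ2 := by
          have h := mul_le_mul_of_nonneg_left hcond hn0.le
          rw [← mul_assoc, mul_one_div_cancel (ne_of_gt hn0), one_mul] at h
          exact h
        have h2 : Real.exp (lam ^ 2 * ∑ i ∈ Finset.Icc 1 n,
              (P[fun ω' => (X i j ω') ^ 2|ℱ (i - 1)]) ω) ≤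
            Real.exp (lam ^ 2 * ((n:ℝ) * σ2)) :=
          Real.exp_le_exp.2 (mul_le_mul_of_nonneg_left hsv (sq_nonneg lam))
        calc Zn ω * Real.exp (lam ^ 2 * ∑ i ∈ Finset.Icc 1 n,
              (P[fun ω' => (X i j ω') ^ 2|ℱ (i - 1)]) ω)
            ≤ Zn ω * Real.exp (lam ^ 2 * ((n:ℝ) * σ2)) :=
              mul_le_mul_of_nonneg_left h2 (hZn_nonneg ω)
          _ ≤ (Zn ω + 1) * Real.exp (lam ^ 2 * ((n:ℝ) * σ2)) :=
              mul_le_mul_of_nonneg_right (by linarith) (Real.exp_pos _).le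
          _ = (Zn ω + 1) * Real.exp (lam ^ 2 * (n:ℝ) * σ2) := by rw [mul_assoc]
      · rw [if_neg hcond, mul_zero, Real.exp_zero]
        nlinarith [hZn_nonneg ω]
    have hYint : Integrable (fun ω => Real.exp ((lam * n) *
        (if (1 / (n : ℝ)) * ∑ i ∈ Finset.Icc 1 n,
              (P[fun ω' => (X i j ω') ^ 2|ℱ (i - 1)]) ω ≤ σ2
          then (1 / (n : ℝ)) * ∑ i ∈ Finset.Icc 1 n, X i j ω else 0))) P := by
      refine aux_integrable_of_bound (((Real.continuous_exp.comp
        (continuous_const.mul continuous_id)).comp_stronglyMeasurable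
        (hYm j)).aestronglyMeasurable) (Real.exp ((lam * n) * b)) ?_
      filter_upwards [hYb j] with ω hω
      rw [Real.norm_eq_abs, abs_of_pos (Real.exp_pos _)]
      exact Real.exp_le_exp.2 (mul_le_mul_of_nonneg_left ((le_abs_self _).trans hω) ht_pos.le)
    calc ∫ ω, Real.exp ((lam * n) *
        (if (1 / (n : ℝ)) * ∑ i ∈ Finset.Icc 1 n,
              (P[fun ω' => (X i j ω') ^ 2|ℱ (i - 1)]) ω ≤ σ2
          then (1 / (n : ℝ)) * ∑ i ∈ Finset.Icc 1 n, X i j ω else 0)) ∂P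
        ≤ ∫ ω, (Zn ω + 1) * Real.exp (lam ^ 2 * n * σ2) ∂P :=
          integral_mono hYint ((hZn_int.add (integrable_const 1)).mul_const _) hpt
      _ = (∫ ω, (Zn ω + 1) ∂P) * Real.exp (lam ^ 2 * n * σ2) := by
          rw [integral_mul_const]
      _ = (∫ ω, Zn ω ∂P + 1) * Real.exp (lam ^ 2 * n * σ2) := by
          rw [integral_add hZn_int (integrable_const 1), integral_const]
          simp
      _ ≤ (1 + 1) * Real.exp (lam ^ 2 * n * σ2) :=
          mul_le_mul_of_nonneg_right (by linarith) (Real.exp_pos _).le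
      _ = 2 * Real.exp (lam ^ 2 * n * σ2) := by norm_num
  have hmain := auxB P hN (fun j ω =>
      (if (1 / (n : ℝ)) * ∑ i ∈ Finset.Icc 1 n,
            (P[fun ω' => (X i j ω') ^ 2|ℱ (i - 1)]) ω ≤ σ2
        then (1 / (n : ℝ)) * ∑ i ∈ Finset.Icc 1 n, X i j ω else 0))
    hYm b hYb A hA hA0 (lam * n) (2 * Real.exp (lam ^ 2 * n * σ2)) ht_pos hK_pos hmgfY
  refine hmain.trans ?_
  -- arithmetic
  have hsqrtLn : Real.sqrt (1 / (n:ℝ) * L) = Real.sqrt (L / n) := by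
    rw [one_div_mul_eq_div]
  rw [hsqrtLn]
  set r := Real.sqrt (L / n) with hrdef
  have hr_pos : 0 < r := Real.sqrt_pos.2 (div_pos hL_pos hn0)
  have hqr : q = Real.sqrt 2 * r := by
    rw [hqdef, hrdef, ← Real.sqrt_mul (by norm_num : (0:ℝ) ≤ 2)]
    congr 1
    ring
  have hsqrt2 : Real.sqrt 2 ≤ 2 := by
    have h1 : Real.sqrt 2 ≤ Real.sqrt 4 := Real.sqrt_le_sqrt (by norm_num)
    have h2 : Real.sqrt 4 = 2 := by
      rw [show (4:ℝ) = 2 ^ 2 by norm_num, Real.sqrt_sq (by norm_num : (0:ℝ) ≤ 2)]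
    linarith
  have hq_le : q ≤ 2 * r := by
    rw [hqr]
    exact mul_le_mul_of_nonneg_right hsqrt2 hr_pos.le
  have hqs_le : q * s ≤ 2 * s * r := by
    calc q * s ≤ (2 * r) * s := mul_le_mul_of_nonneg_right hq_le hs_pos.le
      _ = 2 * s * r := by ring
  -- log bound
  have hlog_le : Real.log ((N : ℝ) * (2 * Real.exp (lam ^ 2 * n * σ2)) / (P A).toReal) ≤
      2 * L + lam ^ 2 * n * σ2 := by
    have heq : (N : ℝ) * (2 * Real.exp (lam ^ 2 * n * σ2)) / (P A).toReal =
        (2 * N / (P A).toReal) * Real.exp (lam ^ 2 * n * σ2) := by ring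
    rw [heq, Real.log_mul (by positivity) (Real.exp_ne_zero _), Real.log_exp]
    have h1 : 2 * ((N : ℝ) / (P A).toReal) ≤ (1 + N / (P A).toReal) ^ 2 := by
      nlinarith [sq_nonneg ((N : ℝ) / (P A).toReal)]
    have h2 : Real.log (2 * (N : ℝ) / (P A).toReal) ≤
        Real.log ((1 + (N : ℝ) / (P A).toReal) ^ 2) := by
      refine Real.log_le_log (by positivity) ?_
      rw [mul_div_assoc]
      exact h1
    rw [Real.log_pow] at h2
    have h3 : Real.log (2 * (N : ℝ) / (P A).toReal) ≤ 2 * L := by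
      rw [hLdef]
      exact h2.trans (by push_cast; ring_nf; exact le_refl _)
    linarith
  have hdiv_le : Real.log ((N : ℝ) * (2 * Real.exp (lam ^ 2 * n * σ2)) / (P A).toReal) /
      (lam * n) ≤ 2 * L / (lam * n) + lam * σ2 := by
    have heq : (2 * L + lam ^ 2 * n * σ2) / (lam * n) = 2 * L / (lam * n) + lam * σ2 := by
      field_simp [ne_of_gt hlam_pos, ne_of_gt hn0]
    rw [← heq]
    exact (div_le_div_iff_of_pos_right ht_pos).2 hlog_le
  refine hdiv_le.trans ?_
  have hlam_s : lam * σ2 ≤ 2 * s * r := by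
    have h1 : lam * σ2 ≤ c1 * σ2 := mul_le_mul_of_nonneg_right hlam_le_c1 hσ2.le
    have h2 : c1 * σ2 = q * s := by
      rw [hc1def, ← hs_sq]
      field_simp [ne_of_gt hs_pos]
    linarith
  have hkey1 : 2 * L / (c1 * n) = q * s := by
    have h2L : 2 * L = q ^ 2 * n := by rw [hq_sq]; field_simp
    rw [hc1def, h2L]
    rw [div_eq_iff (mul_ne_zero (ne_of_gt (div_pos hq_pos hs_pos)) (ne_of_gt hn0))]
    field_simp [ne_of_gt hq_pos, ne_of_gt hs_pos, ne_of_gt hn0]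
  have hsecond : 2 * L / (lam * n) ≤ 2 * s * r + 8 / 3 * (b / n) * L := by
    have hbnL : 0 ≤ 8 / 3 * (b / (n:ℝ)) * L :=
      mul_nonneg (mul_nonneg (by norm_num) (div_nonneg hb hn0.le)) hL_pos.le
    by_cases hbz : b = 0
    · have hlameq : lam = c1 := by rw [hlamdef, if_pos hbz]
      rw [hlameq, hkey1]
      linarith
    · rcases le_total c1 (1 / b) with hminc | hminc
      · have hlameq : lam = c1 := by rw [hlamdef, if_neg hbz, min_eq_left hminc]
        rw [hlameq, hkey1]
        linarith
      · have hb' : 0 < b := hbpos hbz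
        have hlameq : lam = 1 / b := by rw [hlamdef, if_neg hbz, min_eq_right hminc]
        have heq2 : 2 * L / (lam * n) = 2 * L * b / n := by
          rw [hlameq]
          field_simp
        rw [heq2]
        have h5 : 2 * L * b / (n:ℝ) ≤ 8 / 3 * (b / n) * L := by
          rw [show (8:ℝ) / 3 * (b / n) * L = (8 / 3 * b * L) / n by ring]
          refine (div_le_div_iff_of_pos_right hn0).2 ?_
          nlinarith [hL_pos.le, hb'.le]
        have hr2 : 0 ≤ 2 * s * r :=
          mul_nonneg (mul_nonneg (by norm_num) hs_pos.le) hr_pos.le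
        linarith
  -- combine
  have hfinal : 2 * L / (lam * n) + lam * σ2 ≤ 4 * s * r + 8 / 3 * (b / n) * L := by
    linarith
  exact hfinal
end
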